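/- arXiv:1809.03180 — 4 statements merged into one kernel-verified Lean document; each statement's English description precedes it below -/
import Mathlib

section
/- Let R be a commutative ring, let z be a unit of R, let x ≥ 1 be an integer, and let α₁,…,α_{x-1}, γ₁,…,γ_{x-1} ∈ R. Then (z - z⁻¹) · Σ_{j=1}^{x-1} [ ∏_{k=1}^{j-1} (α_k + (1-α_kγ_k)z⁻¹)(1-γ_k z) ] · [ ∏_{k=j+1}^{x-1} (α_k + (1-α_kγ_k)z)(1-γ_k z⁻¹) ] = ∏_{k=1}^{x-1} (α_k + (1-α_kγ_k)z)(1-γ_k z⁻¹) − ∏_{k=1}^{x-1} (α_k + (1-α_kγ_k)z⁻¹)(1-γ_k z). -/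
lemma tel_aux {R : Type*} [CommRing R] (a b : ℕ → R) :
    ∀ n : ℕ, ∑ j ∈ Finset.Icc 1 n,
        (∏ k ∈ Finset.Icc 1 (j - 1), b k) * (∏ k ∈ Finset.Icc (j + 1) n, a k) * (a j - b j)
      = (∏ k ∈ Finset.Icc 1 n, a k) - ∏ k ∈ Finset.Icc 1 n, b k := by
  intro n
  induction n with
  | zero => simp
  | succ n ih =>
    have h1 : Finset.Icc 1 (n + 1) = insert (n + 1) (Finset.Icc 1 n) := by
      ext m; simp [Finset.mem_Icc]; omega
    rw [h1, Finset.sum_insert (by simp), Finset.prod_insert (by simp),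
      Finset.prod_insert (by simp)]
    have h2 : ∀ j ∈ Finset.Icc 1 n,
        (∏ k ∈ Finset.Icc 1 (j - 1), b k) * (∏ k ∈ Finset.Icc (j + 1) (n + 1), a k) * (a j - b j)
        = a (n + 1) * ((∏ k ∈ Finset.Icc 1 (j - 1), b k) *
            (∏ k ∈ Finset.Icc (j + 1) n, a k) * (a j - b j)) := by
      intro j hj
      simp only [Finset.mem_Icc] at hj
      have : Finset.Icc (j + 1) (n + 1) = insert (n + 1) (Finset.Icc (j + 1) n) := by
        ext m; simp [Finset.mem_Icc]; omega
      rw [this, Finset.prod_insert (by simp)]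
      ring
    rw [Finset.sum_congr rfl h2, ← Finset.mul_sum, ih]
    have h3 : Finset.Icc (n + 1 + 1) (n + 1) = ∅ := by
      rw [Finset.Icc_eq_empty]; omega
    rw [h3]
    simp only [Finset.prod_empty, Nat.add_sub_cancel]
    ring

/-- Lemma 4.1 of the paper: the telescoping identity used to evaluate
one-particle wavefunctions of the free-fermionic six-vertex model under reflecting boundary.
Here `z` is a unit of the commutative ring `R`, and `α γ : ℕ → R` give the parameters
`α₁,…,α_{x-1}`, `γ₁,…,γ_{x-1}`. -/
theorem telescoping_identity (R : Type*) [CommRing R] (z : Rˣ) (x : ℕ) (hx : 1 ≤ x)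
    (α γ : ℕ → R) :
    ((z : R) - ((z⁻¹ : Rˣ) : R)) *
      ∑ j ∈ Finset.Icc 1 (x - 1),
        (∏ k ∈ Finset.Icc 1 (j - 1),
          (α k + (1 - α k * γ k) * ((z⁻¹ : Rˣ) : R)) * (1 - γ k * (z : R))) *
        (∏ k ∈ Finset.Icc (j + 1) (x - 1),
          (α k + (1 - α k * γ k) * (z : R)) * (1 - γ k * ((z⁻¹ : Rˣ) : R)))
    = (∏ k ∈ Finset.Icc 1 (x - 1),
          (α k + (1 - α k * γ k) * (z : R)) * (1 - γ k * ((z⁻¹ : Rˣ) : R)))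
      - (∏ k ∈ Finset.Icc 1 (x - 1),
          (α k + (1 - α k * γ k) * ((z⁻¹ : Rˣ) : R)) * (1 - γ k * (z : R))) := by
  set w : R := ((z⁻¹ : Rˣ) : R)
  have hz : (z : R) * w = 1 := by
    simpa [w] using congrArg (Units.val) (mul_inv_cancel z)
  set a : ℕ → R := fun k => (α k + (1 - α k * γ k) * (z : R)) * (1 - γ k * w) with ha
  set b : ℕ → R := fun k => (α k + (1 - α k * γ k) * w) * (1 - γ k * (z : R)) with hb
  have key : ∀ j, a j - b j = (z : R) - w := by
    intro j
    simp only [ha, hb]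
    ring
  rw [Finset.mul_sum, ← tel_aux a b (x - 1)]
  exact Finset.sum_congr rfl fun j _ => by rw [key]; ring
end

section
/- Let x ≥ 1 be an integer and let t, α₀,…,α_{x-1}, γ₀,…,γ_x ∈ ℂ, and let z ∈ ℂ with z ≠ 0 and z² ≠ 1. Then ((1-α₀γ₀)tz - α₀) · ∏_{k=1}^{x-1}((1-α_kγ_k)z + α_k) · ∏_{k=1}^{x}(1-γ_k z⁻¹) + ((1-α₀γ₀)z⁻¹ + α₀) · (tγ_x z + 1) · ∏_{k=1}^{x-1}((1-α_kγ_k)z⁻¹ + α_k)(1-γ_k z) + (t+1)z · ((1-α₀γ₀)z⁻¹ + α₀) · Σ_{j=1}^{x-1} [ ∏_{k=1}^{j-1}((1-α_kγ_k)z⁻¹ + α_k)(1-γ_k z) ] · [ ∏_{k=j+1}^{x-1}((1-α_kγ_k)z + α_k) ] · [ ∏_{k=j+1}^{x}(1-γ_k z⁻¹) ] = (1+tz²)/(z²-1) · [ ∏_{j=0}^{x-1}(α_j + (1-α_jγ_j)z) · ∏_{j=1}^{x}(1-γ_j z⁻¹) − ∏_{j=0}^{x-1}(α_j + (1-α_jγ_j)z⁻¹)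 · ∏_{j=1}^{x}(1-γ_j z) ]. -/
/-!
Group the weights site by site: `a k = ((1 - α k γ k) z + α k)(1 - γ k z⁻¹)` and
`b k = ((1 - α k γ k) z⁻¹ + α k)(1 - γ k z)` for `1 ≤ k ≤ x - 1`. Their difference
`a k - b k = z - z⁻¹` does not depend on `k`, so the telescoping expansion of `∏ a - ∏ b`
identifies the middle sum, up to a factor `1 - γ x z⁻¹`, with `(∏ a - ∏ b) / (z - z⁻¹)`.
What remains is an identity between the boundary factors at sites `0` and `x` alone.
-/

open Finset

theorem Finset.prod_Icc_sub_prod_Icc {R : Type*} [CommRing R] (a b : ℕ → R) (n : ℕ) :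
    ∏ k ∈ Icc 1 n, a k - ∏ k ∈ Icc 1 n, b k
      = ∑ j ∈ Icc 1 n,
          (∏ k ∈ Icc 1 (j - 1), b k) * (a j - b j) * ∏ k ∈ Icc (j + 1) n, a k := by
  induction n with
  | zero => simp
  | succ n ih =>
    have hsum : ∑ j ∈ Icc 1 n, (∏ k ∈ Icc 1 (j - 1), b k) * (a j - b j) *
          ∏ k ∈ Icc (j + 1) (n + 1), a k
        = (∏ k ∈ Icc 1 n, a k - ∏ k ∈ Icc 1 n, b k) * a (n + 1) := by
      rw [ih, sum_mul]
      refine sum_congr rfl fun j hj => ?_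
      rw [prod_Icc_succ_top (by grind), mul_assoc _ _ (a (n + 1))]
    rw [sum_Icc_succ_top (by omega), hsum, prod_Icc_succ_top (by omega),
      prod_Icc_succ_top (by omega), Nat.add_sub_cancel,
      Icc_eq_empty (by omega : ¬ n + 1 + 1 ≤ n + 1), prod_empty]
    ring

theorem Finset.prod_Icc_sub_prod_Icc_of_sub_eq {R : Type*} [CommRing R] {a b : ℕ → R} {c : R}
    (h : ∀ k, a k - b k = c) (n : ℕ) :
    ∏ k ∈ Icc 1 n, a k - ∏ k ∈ Icc 1 n, b k
      = c * ∑ j ∈ Icc 1 n, (∏ k ∈ Icc 1 (j - 1), b k) * ∏ k ∈ Icc (j + 1) n, a k := by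
  rw [prod_Icc_sub_prod_Icc, mul_sum]
  refine sum_congr rfl fun j _ => ?_
  rw [h]
  ring

theorem site_weight_sub {R : Type*} [CommRing R] (α γ z w : R) :
    ((1 - α * γ) * z + α) * (1 - γ * w) - ((1 - α * γ) * w + α) * (1 - γ * z) = z - w := by
  ring

theorem boundary_weights_identity {K : Type*} [Field K] (t α γ γ' z P Q S : K) (hz : z ≠ 0)
    (hz2 : z ^ 2 ≠ 1) (hPQ : P - Q = (z - z⁻¹) * S) :
    ((1 - α * γ) * t * z - α) * P * (1 - γ' * z⁻¹)
      + ((1 - α * γ) * z⁻¹ + α) * (t * γ' * z + 1) * Q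
      + (t + 1) * z * ((1 - α * γ) * z⁻¹ + α) * (1 - γ' * z⁻¹) * S
    = (1 + t * z ^ 2) / (z ^ 2 - 1) *
        (((1 - α * γ) * z + α) * P * (1 - γ' * z⁻¹)
          - ((1 - α * γ) * z⁻¹ + α) * Q * (1 - γ' * z)) := by
  have hz2' : z ^ 2 - 1 ≠ 0 := sub_ne_zero_of_ne hz2
  have hS : S = z * (P - Q) / (z ^ 2 - 1) := by
    rw [hPQ]
    field_simp
  subst hS
  field_simp
  ring

/-- Proposition 4.2 of the paper: closed form of the one-particle
type I wavefunction of the free-fermionic six-vertex model under reflecting boundary,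
with the Ivanov-type diagonal K-matrix. Here `α γ : ℕ → ℂ` give the parameters
`α₀,…,α_{x-1}` and `γ₀,…,γ_x`. -/
theorem one_particle_typeI (x : ℕ) (hx : 1 ≤ x) (t : ℂ) (α γ : ℕ → ℂ)
    (z : ℂ) (hz : z ≠ 0) (hz2 : z ^ 2 ≠ 1) :
    ((1 - α 0 * γ 0) * t * z - α 0) *
        (∏ k ∈ Finset.Icc 1 (x - 1), ((1 - α k * γ k) * z + α k)) *
        (∏ k ∈ Finset.Icc 1 x, (1 - γ k * z⁻¹))
      + ((1 - α 0 * γ 0) * z⁻¹ + α 0) * (t * γ x * z + 1) *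
        (∏ k ∈ Finset.Icc 1 (x - 1), ((1 - α k * γ k) * z⁻¹ + α k) * (1 - γ k * z))
      + (t + 1) * z * ((1 - α 0 * γ 0) * z⁻¹ + α 0) *
        ∑ j ∈ Finset.Icc 1 (x - 1),
          (∏ k ∈ Finset.Icc 1 (j - 1), ((1 - α k * γ k) * z⁻¹ + α k) * (1 - γ k * z)) *
          (∏ k ∈ Finset.Icc (j + 1) (x - 1), ((1 - α k * γ k) * z + α k)) *
          (∏ k ∈ Finset.Icc (j + 1) x, (1 - γ k * z⁻¹))
    = (1 + t * z ^ 2) / (z ^ 2 - 1) *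
        ((∏ j ∈ Finset.range x, (α j + (1 - α j * γ j) * z)) *
            (∏ j ∈ Finset.Icc 1 x, (1 - γ j * z⁻¹))
          - (∏ j ∈ Finset.range x, (α j + (1 - α j * γ j) * z⁻¹)) *
            (∏ j ∈ Finset.Icc 1 x, (1 - γ j * z))) := by
  obtain ⟨n, rfl⟩ := Nat.exists_add_one_eq.mpr hx
  have telescope := prod_Icc_sub_prod_Icc_of_sub_eq
    (a := fun k => ((1 - α k * γ k) * z + α k) * (1 - γ k * z⁻¹))
    (b := fun k => ((1 - α k * γ k) * z⁻¹ + α k) * (1 - γ k * z))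
    (fun k => site_weight_sub (α k) (γ k) z z⁻¹) n
  have last_site : ∑ j ∈ Icc 1 n,
        (∏ k ∈ Icc 1 (j - 1), ((1 - α k * γ k) * z⁻¹ + α k) * (1 - γ k * z)) *
        (∏ k ∈ Icc (j + 1) n, ((1 - α k * γ k) * z + α k)) *
        (∏ k ∈ Icc (j + 1) (n + 1), (1 - γ k * z⁻¹))
      = (1 - γ (n + 1) * z⁻¹) * ∑ j ∈ Icc 1 n,
        (∏ k ∈ Icc 1 (j - 1), ((1 - α k * γ k) * z⁻¹ + α k) * (1 - γ k * z)) *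
        (∏ k ∈ Icc (j + 1) n, ((1 - α k * γ k) * z + α k) * (1 - γ k * z⁻¹)) := by
    rw [mul_sum]
    refine sum_congr rfl fun j hj => ?_
    rw [prod_Icc_succ_top (by grind), prod_mul_distrib (s := Icc (j + 1) n)]
    ring
  have first_site (w : ℂ) : ∏ j ∈ range (n + 1), (α j + (1 - α j * γ j) * w)
      = ((1 - α 0 * γ 0) * w + α 0) * ∏ k ∈ Icc 1 n, ((1 - α k * γ k) * w + α k) := by
    rw [prod_range_eq_mul_Ico _ n.succ_pos, Nat.succ_eq_add_one, Ico_add_one_right_eq_Icc]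
    simp only [add_comm (α _)]
  rw [Nat.add_sub_cancel, last_site, first_site, first_site,
    prod_Icc_succ_top (by omega : 1 ≤ n + 1), prod_Icc_succ_top (by omega : 1 ≤ n + 1)]
  simp only [prod_mul_distrib] at telescope ⊢
  linear_combination boundary_weights_identity t (α 0) (γ 0) (γ (n + 1)) z _ _ _ hz hz2 telescope
end

section
/- Let x ≥ 1 be an integer, let t, α₁,…,α_{x-1}, γ₁,…,γ_x ∈ ℂ, and let z, s, w ∈ ℂ with z ≠ 0, z² ≠ 1, s² = -t and w² = z. Then (-s·w) · ∏_{k=1}^{x-1}((1-α_kγ_k)z + α_k) · ∏_{k=1}^{x}(1-γ_k z⁻¹) + w⁻¹ · (tγ_x z + 1) · ∏_{k=1}^{x-1}((1-α_kγ_k)z⁻¹ + α_k)(1-γ_k z) + (t+1)z · w⁻¹ · Σ_{j=1}^{x-1} [ ∏_{k=1}^{j-1}((1-α_kγ_k)z⁻¹ + α_k)(1-γ_k z) ] · [ ∏_{k=j+1}^{x-1}((1-α_kγ_k)z + α_k) ] · [ ∏_{k=j+1}^{x}(1-γ_k z⁻¹) ] = w(1-sz)/(z²-1) · [ (z + s)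 ∏_{j=1}^{x-1}(α_j + (1-α_jγ_j)z) ∏_{j=1}^{x}(1-γ_j z⁻¹) − (z⁻¹ + s) ∏_{j=1}^{x-1}(α_j + (1-α_jγ_j)z⁻¹) ∏_{j=1}^{x}(1-γ_j z) ]. -/
/-!
Write `u k = ((1 - α k γ k) z⁻¹ + α k)(1 - γ k z)` and `v k = ((1 - α k γ k) z + α k)(1 - γ k z⁻¹)`.
Because the coefficients `1 - α k γ k` and `α k γ k` add up to `1` (the free-fermion condition),
`u k - v k = z⁻¹ - z` does not depend on `k`, so the sum over `j` telescopes to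
`(∏ u - ∏ v) / (z⁻¹ - z)`. After this the identity only involves the four products
`∏ ((1 - α γ) z^{±1} + α)`, `∏ (1 - γ z^{±1})` over `1, …, x - 1` and the last parameter `γ x`,
and is checked by clearing denominators.
-/

open Finset

section Telescoping

variable {R : Type*} [CommRing R]

theorem mul_sum_prod_Icc_mul_prod_Icc_of_sub_eq {u v : ℕ → R} {d : R} (h : ∀ k, u k - v k = d)
    (n : ℕ) :
    d * ∑ j ∈ Icc 1 n, (∏ k ∈ Icc 1 (j - 1), u k) * ∏ k ∈ Icc (j + 1) n, v k
      = ∏ k ∈ Icc 1 n, u k - ∏ k ∈ Icc 1 n, v k := by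
  induction n with
  | zero => simp
  | succ n ih =>
    have hlower : ∀ j ∈ Icc 1 n, (∏ k ∈ Icc 1 (j - 1), u k) * ∏ k ∈ Icc (j + 1) (n + 1), v k
        = (∏ k ∈ Icc 1 (j - 1), u k) * (∏ k ∈ Icc (j + 1) n, v k) * v (n + 1) := by
      intro j hj
      rw [prod_Icc_succ_top (by grind), mul_assoc]
    have htop : ∏ k ∈ Icc (n + 1 + 1) (n + 1), v k = 1 := by simp
    rw [sum_Icc_succ_top (by omega), sum_congr rfl hlower, ← sum_mul, mul_add, ← mul_assoc, ih,
      htop, Nat.add_sub_cancel, prod_Icc_succ_top (by omega) u, prod_Icc_succ_top (by omega) v,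
      ← h (n + 1)]
    ring

theorem sum_prod_Icc_mul_prod_Icc_mul_prod_Icc_succ (u f g : ℕ → R) (n : ℕ) :
    ∑ j ∈ Icc 1 n, (∏ k ∈ Icc 1 (j - 1), u k) * (∏ k ∈ Icc (j + 1) n, f k) *
        ∏ k ∈ Icc (j + 1) (n + 1), g k
      = (∑ j ∈ Icc 1 n, (∏ k ∈ Icc 1 (j - 1), u k) * ∏ k ∈ Icc (j + 1) n, f k * g k) *
          g (n + 1) := by
  rw [sum_mul]
  refine sum_congr rfl fun j hj => ?_
  rw [prod_Icc_succ_top (by grind), prod_mul_distrib]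
  ring

end Telescoping

theorem one_particle_typeII_general (x : ℕ) (hx : 1 ≤ x) (t : ℂ) (α γ : ℕ → ℂ)
    (z s w : ℂ) (hz2 : z ^ 2 ≠ 1) (hs : s ^ 2 = -t) (hw : w ^ 2 = z) :
    (-(s * w)) *
        (∏ k ∈ Finset.Icc 1 (x - 1), ((1 - α k * γ k) * z + α k)) *
        (∏ k ∈ Finset.Icc 1 x, (1 - γ k * z⁻¹))
      + w⁻¹ * (t * γ x * z + 1) *
        (∏ k ∈ Finset.Icc 1 (x - 1), ((1 - α k * γ k) * z⁻¹ + α k) * (1 - γ k * z))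
      + (t + 1) * z * w⁻¹ *
        ∑ j ∈ Finset.Icc 1 (x - 1),
          (∏ k ∈ Finset.Icc 1 (j - 1), ((1 - α k * γ k) * z⁻¹ + α k) * (1 - γ k * z)) *
          (∏ k ∈ Finset.Icc (j + 1) (x - 1), ((1 - α k * γ k) * z + α k)) *
          (∏ k ∈ Finset.Icc (j + 1) x, (1 - γ k * z⁻¹))
    = w * (1 - s * z) / (z ^ 2 - 1) *
        ((z + s) * (∏ j ∈ Finset.Icc 1 (x - 1), (α j + (1 - α j * γ j) * z)) *
            (∏ j ∈ Finset.Icc 1 x, (1 - γ j * z⁻¹))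
          - (z⁻¹ + s) * (∏ j ∈ Finset.Icc 1 (x - 1), (α j + (1 - α j * γ j) * z⁻¹)) *
            (∏ j ∈ Finset.Icc 1 x, (1 - γ j * z))) := by
  obtain ⟨n, rfl⟩ : ∃ n, x = n + 1 := ⟨x - 1, by omega⟩
  obtain rfl : t = -s ^ 2 := by linear_combination hs
  subst hw
  obtain rfl | hw0 := eq_or_ne w 0
  · simp
  have htelescope := mul_sum_prod_Icc_mul_prod_Icc_of_sub_eq
    (u := fun k => ((1 - α k * γ k) * (w ^ 2)⁻¹ + α k) * (1 - γ k * w ^ 2))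
    (v := fun k => ((1 - α k * γ k) * w ^ 2 + α k) * (1 - γ k * (w ^ 2)⁻¹))
    (d := (w ^ 2)⁻¹ - w ^ 2) (fun k => by ring) n
  rw [prod_mul_distrib, prod_mul_distrib] at htelescope
  simp only [add_comm (α _)]
  rw [Nat.add_sub_cancel, sum_prod_Icc_mul_prod_Icc_mul_prod_Icc_succ, prod_mul_distrib,
    prod_Icc_succ_top (by omega) fun k => 1 - γ k * (w ^ 2)⁻¹,
    prod_Icc_succ_top (by omega) fun k => 1 - γ k * w ^ 2]
  generalize (∑ j ∈ Icc 1 n, _ : ℂ) = E at htelescope ⊢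
  generalize ∏ k ∈ Icc 1 n, ((1 - α k * γ k) * w ^ 2 + α k) = G at htelescope ⊢
  generalize ∏ k ∈ Icc 1 n, ((1 - α k * γ k) * (w ^ 2)⁻¹ + α k) = G' at htelescope ⊢
  generalize ∏ k ∈ Icc 1 n, (1 - γ k * w ^ 2) = C at htelescope ⊢
  generalize ∏ k ∈ Icc 1 n, (1 - γ k * (w ^ 2)⁻¹) = C' at htelescope ⊢
  have hw4 : w ^ 4 - 1 ≠ 0 := sub_ne_zero.mpr (by rwa [← pow_mul] at hz2)
  obtain rfl : E = w ^ 2 * (G * C' - G' * C) / (w ^ 4 - 1) := by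
    field_simp at htelescope ⊢
    linear_combination -htelescope
  field_simp
  ring

/-- Proposition 6.1 of the paper: closed form of the one-particle
type II wavefunction of the free-fermionic six-vertex model under reflecting boundary,
with the Brubaker–Bump–Chinta–Gunnells diagonal K-matrix. Here `s` plays the role of
`√(-t)` and `w` that of `z^{1/2}`, and `α γ : ℕ → ℂ` give the parameters
`α₁,…,α_{x-1}` and `γ₁,…,γ_x`. -/
theorem one_particle_typeII (x : ℕ) (hx : 1 ≤ x) (t : ℂ) (α γ : ℕ → ℂ)
    (z s w : ℂ) (hz : z ≠ 0) (hz2 : z ^ 2 ≠ 1) (hs : s ^ 2 = -t) (hw : w ^ 2 = z) :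
    (-(s * w)) *
        (∏ k ∈ Finset.Icc 1 (x - 1), ((1 - α k * γ k) * z + α k)) *
        (∏ k ∈ Finset.Icc 1 x, (1 - γ k * z⁻¹))
      + w⁻¹ * (t * γ x * z + 1) *
        (∏ k ∈ Finset.Icc 1 (x - 1), ((1 - α k * γ k) * z⁻¹ + α k) * (1 - γ k * z))
      + (t + 1) * z * w⁻¹ *
        ∑ j ∈ Finset.Icc 1 (x - 1),
          (∏ k ∈ Finset.Icc 1 (j - 1), ((1 - α k * γ k) * z⁻¹ + α k) * (1 - γ k * z)) *
          (∏ k ∈ Finset.Icc (j + 1) (x - 1), ((1 - α k * γ k) * z + α k)) *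
          (∏ k ∈ Finset.Icc (j + 1) x, (1 - γ k * z⁻¹))
    = w * (1 - s * z) / (z ^ 2 - 1) *
        ((z + s) * (∏ j ∈ Finset.Icc 1 (x - 1), (α j + (1 - α j * γ j) * z)) *
            (∏ j ∈ Finset.Icc 1 x, (1 - γ j * z⁻¹))
          - (z⁻¹ + s) * (∏ j ∈ Finset.Icc 1 (x - 1), (α j + (1 - α j * γ j) * z⁻¹)) *
            (∏ j ∈ Finset.Icc 1 x, (1 - γ j * z))) :=
  one_particle_typeII_general x hx t α γ z s w hz2 hs hw
end

section
/- Fix integers M ≥ N ≥ 1, parameters t, α₀,…,α_M, γ₀,…,γ_M ∈ ℂ, and integers 1 ≤ x₁ < ⋯ < x_N = M. For nonzero z₁,…,z_N ∈ ℂ with z_j² ≠ 1 for all j and z_j z_k ≠ 1, z_j ≠ z_k for all j < k, define F^I_{M,N}(z₁,…,z_N; γ₁,…,γ_M; x₁,…,x_N) = [ ∏_{j=1}^{N}(1+tz_j²) ∏_{1≤j<k≤N}(1+tz_jz_k)(1+tz_jz_k^{-1}) ] / [ (−1)^N ∏_{j=1}^{N}(1−z_j²) ∏_{1≤j<k≤N}(1−z_jz_k)(z_jz_k^{-1}−1)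 ] × Σ_{σ ∈ S_N} Σ_{τ ∈ {±1}^N} sgn(σ) (−1)^{#{j : τ_j = −1}} ∏_{j=1}^{N} [ ∏_{k=0}^{x_j-1}(α_k + (1-α_kγ_k) z_{σ(j)}^{τ_{σ(j)}}) ] [ ∏_{k=x_j+1}^{M}(1 − γ_k z_{σ(j)}^{τ_{σ(j)}}) ] [ ∏_{k=1}^{M}(1 − γ_k z_{σ(j)}^{-τ_{σ(j)}}) ]. Then, with γ_M specialized to γ_M = z_N, F^I_{M,N}(z₁,…,z_N; γ₁,…,γ_{M-1}, z_N; x₁,…,x_N) = ∏_{j=1}^{N}(t z_N z_j + 1) · ∏_{j=1}^{N-1}(t + z_N z_j^{-1}) · ∏_{j=0}^{M-1}((1-α_jγ_j) z_N^{-1} + α_j) · ∏_{j=1}^{M-1}(1 − γ_j z_N) · F^I_{M-1,N-1}(z₁,…,z_{N-1}; γ₁,…,γ_{M-1}; x₁,…,x_{N-1}), where for N = 1 the function F^I_{M-1,0} is interpreted as 1. -/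
/-!
Setting `γ_M = z_N` makes the factor `1 - γ_M z_N^{∓1}` vanish, so only the terms of the double
sum with `σ(N) = N` and `τ_N = -1` survive. In those, the particle at `x_N = M` contributes an
explicit product in `z_N`, and every other particle loses exactly one factor
`(1 - z_N z)(1 - z_N z⁻¹)`, symmetric in `z ↔ z⁻¹` and hence independent of `σ` and `τ`. The
remaining sum is the one of `F^I_{M-1,N-1}`, and the lost factors combine with the ratio of the
prefactors into `(t z_N z_j + 1)(t + z_N z_j⁻¹)`.
-/

open Finset

/-- The explicit sum formula `F^I_{M,N}` (equation (55) of the paper): the product of the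
type I prefactor and the generalized symplectic Schur function `sp_λ` with
`λ_j = x_{N-j+1} - N + j - 1`.  Variables `z` and particle positions `x` are 0-indexed
(`z j`, `x j` stand for the paper's `z_{j+1}`, `x_{j+1}`); parameter families `α, γ` are
functions on `ℕ` (indices `0,…,M` are used).  The sign choice `τ` is encoded by booleans:
`τ j = true` stands for `τ_j = +1` and `τ j = false` for `τ_j = -1`. -/
noncomputable def FI (M : ℕ) (t : ℂ) (α γ : ℕ → ℂ) {N : ℕ} (x : Fin N → ℕ)
    (z : Fin N → ℂ) : ℂ :=
  ((∏ j, (1 + t * z j ^ 2)) *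
      ∏ j, ∏ k ∈ Ioi j, (1 + t * z j * z k) * (1 + t * z j * (z k)⁻¹)) /
  ((-1 : ℂ) ^ N * (∏ j, (1 - z j ^ 2)) *
      ∏ j, ∏ k ∈ Ioi j, (1 - z j * z k) * (z j * (z k)⁻¹ - 1)) *
  ∑ σ : Equiv.Perm (Fin N), ∑ τ : Fin N → Bool,
    ((Equiv.Perm.sign σ : ℤ) : ℂ) *
    (-1 : ℂ) ^ (Finset.univ.filter (fun j => τ j = false)).card *
    ∏ j,
      ((∏ k ∈ Finset.range (x j),
          (α k + (1 - α k * γ k) * (if τ (σ j) then z (σ j) else (z (σ j))⁻¹))) *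
       (∏ k ∈ Finset.Icc (x j + 1) M,
          (1 - γ k * (if τ (σ j) then z (σ j) else (z (σ j))⁻¹))) *
       (∏ k ∈ Finset.Icc 1 M,
          (1 - γ k * (if τ (σ j) then (z (σ j))⁻¹ else z (σ j)))))

namespace Equiv.Perm

variable {n : ℕ}

def extendLast (σ : Perm (Fin n)) : Perm (Fin (n + 1)) :=
  finSuccEquivLast.symm.permCongr σ.optionCongr

@[simp] theorem extendLast_castSucc (σ : Perm (Fin n)) (i : Fin n) :
    extendLast σ i.castSucc = (σ i).castSucc := by
  simp [extendLast, permCongr_apply]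

@[simp] theorem extendLast_last (σ : Perm (Fin n)) : extendLast σ (Fin.last n) = Fin.last n := by
  simp [extendLast, permCongr_apply]

@[simp] theorem sign_extendLast (σ : Perm (Fin n)) : sign (extendLast σ) = sign σ := by
  simp [extendLast, sign_permCongr]

theorem sum_eq_sum_extendLast {β : Type*} [AddCommMonoid β] (f : Perm (Fin (n + 1)) → β)
    (hf : ∀ σ, σ (Fin.last n) ≠ Fin.last n → f σ = 0) :
    ∑ σ, f σ = ∑ σ : Perm (Fin n), f (extendLast σ) := by
  classical
  let E : Perm (Fin (n + 1)) ≃ Option (Fin n) × Perm (Fin n) :=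
    (permCongr finSuccEquivLast).trans decomposeOption
  have hnone : ∀ σ, E.symm (none, σ) = extendLast σ := fun σ => by
    ext i
    simp [E, extendLast, decomposeOption, permCongr_symm, permCongr_apply]
  have hsome : ∀ i σ, E.symm (some i, σ) (Fin.last n) = i.castSucc := fun i σ => by
    simp [E, decomposeOption, permCongr_symm, permCongr_apply]
  rw [← Equiv.sum_comp E.symm, Fintype.sum_prod_type, Fintype.sum_option]
  simp only [hnone]
  rw [sum_eq_zero fun i _ => sum_eq_zero fun σ _ =>
    hf _ (by rw [hsome]; exact (Fin.castSucc_lt_last i).ne), add_zero]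

end Equiv.Perm

theorem Fin.sum_eq_sum_snoc {n : ℕ} {β M : Type*} [Fintype β] [AddCommMonoid M]
    (b : β) (f : (Fin (n + 1) → β) → M) (hf : ∀ τ, τ (Fin.last n) ≠ b → f τ = 0) :
    ∑ τ, f τ = ∑ τ : Fin n → β, f (Fin.snoc τ b) := by
  refine (Fintype.sum_of_injective _ (fun τ τ' h => (Fin.snoc_injective2 h).1) _ f ?_
    fun _ => rfl).symm
  intro τ hτ
  refine hf τ fun h => hτ ⟨Fin.init τ, ?_⟩
  exact h ▸ Fin.snoc_init_self τ

theorem Fin.prod_prod_Ioi_castSucc {n : ℕ} {M : Type*} [CommMonoid M]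
    (g : Fin (n + 1) → Fin (n + 1) → M) :
    ∏ j, ∏ k ∈ Ioi j, g j k =
      (∏ i : Fin n, ∏ k ∈ Ioi i, g i.castSucc k.castSucc) * ∏ i : Fin n, g i.castSucc (last n) := by
  have hIoi : ∀ i : Fin n, Ioi i.castSucc = insert (last n) ((Ioi i).map castSuccEmb) :=
    fun i => by
      rw [map_castSuccEmb_Ioi, Ioo_insert_right (castSucc_lt_last i), Ioi_eq_Ioc]
      rfl
  rw [prod_univ_castSucc, Ioi_eq_empty.mpr fun b _ => le_last b, prod_empty, mul_one,
    ← prod_mul_distrib]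
  refine prod_congr rfl fun i _ => ?_
  rw [hIoi, prod_insert (by simp), prod_map, mul_comm]
  rfl

theorem Fin.neg_one_pow_card_filter_snoc_false {R : Type*} [CommRing R] {n : ℕ}
    (τ : Fin n → Bool) :
    (-1 : R) ^ (univ.filter fun j => (Fin.snoc τ false : Fin (n + 1) → Bool) j = false).card =
      -(-1 : R) ^ (univ.filter fun j => τ j = false).card := by
  have hprod : ∀ {N : ℕ} (τ : Fin N → Bool), (-1 : R) ^ (univ.filter fun j => τ j = false).card =
      ∏ j, if τ j = false then -1 else 1 := fun τ => by
    rw [prod_ite, Finset.prod_const, Finset.prod_const, one_pow, mul_one]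
  simp [hprod, Fin.prod_univ_castSucc]

theorem prod_Icc_update_succ {β R : Type*} [CommMonoid R] {m b : ℕ} (hb : b ≤ m + 1)
    (γ : ℕ → β) (w : β) (f : β → R) :
    ∏ k ∈ Icc b (m + 1), f (Function.update γ (m + 1) w k) = (∏ k ∈ Icc b m, f (γ k)) * f w := by
  rw [prod_Icc_succ_top hb, Function.update_self]
  congr 1
  refine prod_congr rfl fun k hk => ?_
  rw [Function.update_of_ne (by simp at hk; omega)]

theorem prod_range_update_succ {β R : Type*} [CommMonoid R] {m b : ℕ} (hb : b ≤ m + 1)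
    (γ : ℕ → β) (w : β) (f : ℕ → β → R) :
    ∏ k ∈ range b, f k (Function.update γ (m + 1) w k) = ∏ k ∈ range b, f k (γ k) :=
  prod_congr rfl fun k hk => by rw [Function.update_of_ne (by simp at hk; omega)]

namespace FI

noncomputable def prefactorNum (t : ℂ) {N : ℕ} (z : Fin N → ℂ) : ℂ :=
  (∏ j, (1 + t * z j ^ 2)) * ∏ j, ∏ k ∈ Ioi j, (1 + t * z j * z k) * (1 + t * z j * (z k)⁻¹)

noncomputable def prefactorDen {N : ℕ} (z : Fin N → ℂ) : ℂ :=
  (-1 : ℂ) ^ N * (∏ j, (1 - z j ^ 2)) * ∏ j, ∏ k ∈ Ioi j, (1 - z j * z k) * (z j * (z k)⁻¹ - 1)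

noncomputable def signPow (b : Bool) (u : ℂ) : ℂ := if b then u else u⁻¹

/-- The `j`-th factor of the summand `(σ, τ)` of `F^I`, for `a = x_j` and
`u = z_{σ(j)}^{τ_{σ(j)}}`. -/
noncomputable def weight (M : ℕ) (α γ : ℕ → ℂ) (a : ℕ) (u : ℂ) : ℂ :=
  (∏ k ∈ range a, (α k + (1 - α k * γ k) * u)) * (∏ k ∈ Icc (a + 1) M, (1 - γ k * u)) *
    ∏ k ∈ Icc 1 M, (1 - γ k * u⁻¹)

noncomputable def pairFactor (w u : ℂ) : ℂ := (1 - w * u) * (1 - w * u⁻¹)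

noncomputable def altSum (M : ℕ) (α γ : ℕ → ℂ) {N : ℕ} (x : Fin N → ℕ) (z : Fin N → ℂ) : ℂ :=
  ∑ σ : Equiv.Perm (Fin N), ∑ τ : Fin N → Bool,
    ((Equiv.Perm.sign σ : ℤ) : ℂ) * (-1 : ℂ) ^ (univ.filter (fun j => τ j = false)).card *
      ∏ j, weight M α γ (x j) (signPow (τ (σ j)) (z (σ j)))

theorem eq_prefactor_mul_altSum (M : ℕ) (t : ℂ) (α γ : ℕ → ℂ) {N : ℕ} (x : Fin N → ℕ)
    (z : Fin N → ℂ) :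
    FI M t α γ x z = prefactorNum t z / prefactorDen z * altSum M α γ x z := by
  have hinv : ∀ (b : Bool) (u : ℂ), (if b then u⁻¹ else u) = (signPow b u)⁻¹ := by
    intro b u; cases b <;> simp [signPow]
  simp only [FI, prefactorNum, prefactorDen, altSum, weight, hinv]
  rfl

section weight
variable {α γ : ℕ → ℂ} {a M : ℕ} {u : ℂ}

theorem weight_eq_zero_of_lt (ha : a < M) (hu : γ M * u = 1) : weight M α γ a u = 0 := by
  refine mul_eq_zero_of_left (mul_eq_zero_of_right _ (prod_eq_zero (i := M) ?_ ?_)) _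
  · simpa using ha
  · rw [hu, sub_self]

theorem weight_eq_zero_of_one_le (hM : 1 ≤ M) (hu : γ M * u⁻¹ = 1) : weight M α γ a u = 0 :=
  mul_eq_zero_of_right _ (prod_eq_zero (i := M) (by simpa using hM) (by rw [hu, sub_self]))

variable {m : ℕ} (α γ) (w : ℂ)

theorem weight_update_succ_of_le (ha : a ≤ m) :
    weight (m + 1) α (Function.update γ (m + 1) w) a u =
      weight m α γ a u * pairFactor w u := by
  simp only [weight, pairFactor]
  rw [prod_range_update_succ (by omega) γ w (fun k c => α k + (1 - α k * c) * u),
    prod_Icc_update_succ (by omega) γ w (fun c => 1 - c * u),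
    prod_Icc_update_succ (by omega) γ w (fun c => 1 - c * u⁻¹)]
  ring

theorem weight_update_succ_self :
    weight (m + 1) α (Function.update γ (m + 1) w) (m + 1) u =
      (∏ k ∈ range (m + 1), (α k + (1 - α k * γ k) * u)) * (∏ k ∈ Icc 1 m, (1 - γ k * u⁻¹)) *
        (1 - w * u⁻¹) := by
  simp only [weight]
  rw [prod_range_update_succ le_rfl γ w (fun k c => α k + (1 - α k * c) * u),
    prod_Icc_update_succ (by omega) γ w (fun c => 1 - c * u⁻¹), Icc_eq_empty (by omega),
    prod_empty]
  ring

end weight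

theorem pairFactor_inv (w u : ℂ) : pairFactor w u⁻¹ = pairFactor w u := by
  rw [pairFactor, pairFactor, inv_inv, mul_comm]

theorem pairFactor_signPow (b : Bool) (w u : ℂ) : pairFactor w (signPow b u) = pairFactor w u := by
  cases b
  · exact pairFactor_inv w u
  · rfl

section reduction
variable {m n : ℕ} (α γ : ℕ → ℂ) {x : Fin (n + 1) → ℕ} {z : Fin (n + 1) → ℂ}

/-- Once `γ_M = z_N`, the factor `1 - γ_M z_N^{∓τ_N}` kills the summand: through the last
product if `τ_N = +1`, and through the middle product of the particle `j = σ⁻¹(N)` if `τ_N = -1`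
and `j ≠ N`, since then `x_j < M`. -/
theorem prod_weight_eq_zero (hx : StrictMono x) (hxM : x (Fin.last n) = m + 1)
    (hz : z (Fin.last n) ≠ 0) (hγ : γ (m + 1) = z (Fin.last n))
    (σ : Equiv.Perm (Fin (n + 1))) (τ : Fin (n + 1) → Bool)
    (hστ : σ (Fin.last n) = Fin.last n → τ (Fin.last n) = true) :
    ∏ j, weight (m + 1) α γ (x j) (signPow (τ (σ j)) (z (σ j))) = 0 := by
  refine prod_eq_zero (mem_univ (σ.symm (Fin.last n))) ?_
  rw [σ.apply_symm_apply]
  cases hτ : τ (Fin.last n)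
  · refine weight_eq_zero_of_lt ?_ (by simp [signPow, hγ, hz])
    rw [← hxM]
    refine hx (lt_of_le_of_ne (Fin.le_last _) fun h => ?_)
    simpa [hτ] using hστ (σ.symm_apply_eq.mp h).symm
  · exact weight_eq_zero_of_one_le (by omega) (by simp [signPow, hγ, hz])

theorem altSum_update_succ (hx : StrictMono x) (hxM : x (Fin.last n) = m + 1)
    (hz : z (Fin.last n) ≠ 0) :
    altSum (m + 1) α (Function.update γ (m + 1) (z (Fin.last n))) x z =
      -((∏ k ∈ range (m + 1), (α k + (1 - α k * γ k) * (z (Fin.last n))⁻¹)) *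
          (∏ k ∈ Icc 1 m, (1 - γ k * z (Fin.last n))) * (1 - z (Fin.last n) ^ 2) *
          ∏ i : Fin n, pairFactor (z (Fin.last n)) (z i.castSucc)) *
        altSum m α γ (fun i => x i.castSucc) (fun i => z i.castSucc) := by
  set w := z (Fin.last n)
  have hx_lt : ∀ i : Fin n, x i.castSucc ≤ m := fun i => by
    have := hx (Fin.castSucc_lt_last i); omega
  have hvanish := prod_weight_eq_zero α (Function.update γ (m + 1) w) hx hxM hz
    (Function.update_self _ _ _)
  unfold altSum
  rw [Equiv.Perm.sum_eq_sum_extendLast _ fun σ hσ => sum_eq_zero fun τ _ => by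
    rw [hvanish σ τ (absurd · hσ), mul_zero], mul_sum]
  refine sum_congr rfl fun σ _ => ?_
  rw [Fin.sum_eq_sum_snoc false _ fun τ hτ => by
    rw [hvanish _ τ fun _ => by simpa using hτ, mul_zero], mul_sum]
  refine sum_congr rfl fun τ _ => ?_
  simp only [Equiv.Perm.sign_extendLast, Fin.neg_one_pow_card_filter_snoc_false,
    Fin.prod_univ_castSucc, Equiv.Perm.extendLast_castSucc, Equiv.Perm.extendLast_last,
    Fin.snoc_castSucc, Fin.snoc_last, hxM, weight_update_succ_of_le _ _ _ (hx_lt _),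
    weight_update_succ_self]
  rw [prod_mul_distrib]
  simp only [pairFactor_signPow]
  rw [Equiv.prod_comp σ fun s => pairFactor w (z s.castSucc)]
  simp only [signPow, Bool.false_eq_true, if_false, inv_inv]
  ring

end reduction

section prefactor
variable {n : ℕ} (t : ℂ) (z : Fin (n + 1) → ℂ)

theorem prefactorNum_castSucc :
    prefactorNum t z =
      prefactorNum t (fun i : Fin n => z i.castSucc) * (1 + t * z (Fin.last n) ^ 2) *
        ∏ i : Fin n, (1 + t * z i.castSucc * z (Fin.last n)) *
          (1 + t * z i.castSucc * (z (Fin.last n))⁻¹) := by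
  rw [prefactorNum, prefactorNum, Fin.prod_prod_Ioi_castSucc,
    Fin.prod_univ_castSucc (f := fun j => 1 + t * z j ^ 2)]
  ring

theorem prefactorDen_castSucc :
    prefactorDen z =
      -(prefactorDen (fun i : Fin n => z i.castSucc) * (1 - z (Fin.last n) ^ 2) *
        ∏ i : Fin n, (1 - z i.castSucc * z (Fin.last n)) *
          (z i.castSucc * (z (Fin.last n))⁻¹ - 1)) := by
  rw [prefactorDen, prefactorDen, Fin.prod_prod_Ioi_castSucc,
    Fin.prod_univ_castSucc (f := fun j => 1 - z j ^ 2)]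
  ring

end prefactor

theorem prefactorDen_ne_zero {N : ℕ} {z : Fin N → ℂ} (hz0 : ∀ j, z j ≠ 0)
    (hz1 : ∀ j, z j ^ 2 ≠ 1) (hzz : ∀ j k, j < k → z j * z k ≠ 1)
    (hzne : ∀ j k, j < k → z j ≠ z k) : prefactorDen z ≠ 0 := by
  refine mul_ne_zero (mul_ne_zero (by simp) (prod_ne_zero_iff.mpr fun j _ =>
    sub_ne_zero.mpr (hz1 j).symm)) (prod_ne_zero_iff.mpr fun j _ => prod_ne_zero_iff.mpr
    fun k hk => mul_ne_zero (sub_ne_zero.mpr (hzz j k (mem_Ioi.mp hk)).symm) ?_)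
  rw [sub_ne_zero, Ne, mul_inv_eq_one₀ (hz0 k)]
  exact hzne j k (mem_Ioi.mp hk)

theorem mul_pairFactor_eq {t z w : ℂ} (hz : z ≠ 0) (hw : w ≠ 0) :
    (1 + t * z * w) * (1 + t * z * w⁻¹) * pairFactor w z =
      (t * w * z + 1) * (t + w * z⁻¹) * ((1 - z * w) * (z * w⁻¹ - 1)) := by
  rw [pairFactor]
  field_simp
  ring

theorem prefactor_mul_prod_pairFactor {n : ℕ} (t : ℂ) {z : Fin (n + 1) → ℂ} (hz0 : ∀ j, z j ≠ 0)
    (hden : prefactorDen z ≠ 0) :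
    prefactorNum t z / prefactorDen z *
        -((1 - z (Fin.last n) ^ 2) * ∏ i : Fin n, pairFactor (z (Fin.last n)) (z i.castSucc)) =
      (∏ j, (t * z (Fin.last n) * z j + 1)) *
        (∏ i : Fin n, (t + z (Fin.last n) * (z i.castSucc)⁻¹)) *
        (prefactorNum t (fun i : Fin n => z i.castSucc) /
          prefactorDen (fun i : Fin n => z i.castSucc)) := by
  rw [prefactorDen_castSucc, neg_ne_zero] at hden
  simp only [mul_ne_zero_iff] at hden
  obtain ⟨⟨hden', hw2⟩, hcross⟩ := hden
  set w := z (Fin.last n)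
  set N' := prefactorNum t (fun i : Fin n => z i.castSucc)
  set D' := prefactorDen (fun i : Fin n => z i.castSucc)
  set S := ∏ i : Fin n, (t * w * z i.castSucc + 1)
  set T := ∏ i : Fin n, (t + w * (z i.castSucc)⁻¹)
  set Q := ∏ i : Fin n, (1 - z i.castSucc * w) * (z i.castSucc * w⁻¹ - 1)
  have key : (∏ i : Fin n, (1 + t * z i.castSucc * w) * (1 + t * z i.castSucc * w⁻¹)) *
      (∏ i : Fin n, pairFactor w (z i.castSucc)) = S * T * Q := by
    simp only [S, T, Q, ← prod_mul_distrib]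
    exact prod_congr rfl fun i _ => mul_pairFactor_eq (hz0 i.castSucc) (hz0 (Fin.last n))
  have hN' : N' / D' * D' = N' := div_mul_cancel₀ _ hden'
  rw [prefactorNum_castSucc, prefactorDen_castSucc, Fin.prod_univ_castSucc, div_mul_eq_mul_div,
    div_eq_iff (neg_ne_zero.mpr (mul_ne_zero (mul_ne_zero hden' hw2) hcross))]
  linear_combination (-N' * (1 + t * w ^ 2) * (1 - w ^ 2)) * key +
    (S * (1 + t * w ^ 2) * T * (1 - w ^ 2) * Q) * hN'

end FI

theorem FI_IzerginKorepin_recursion_general (m n : ℕ) (t : ℂ) (α γ : ℕ → ℂ)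
    (x : Fin (n + 1) → ℕ) (hx : StrictMono x)
    (hxM : x (Fin.last n) = m + 1)
    (z : Fin (n + 1) → ℂ) (hz0 : ∀ j, z j ≠ 0) (hz1 : ∀ j, z j ^ 2 ≠ 1)
    (hzz : ∀ j k, j < k → z j * z k ≠ 1) (hzne : ∀ j k, j < k → z j ≠ z k) :
    FI (m + 1) t α (Function.update γ (m + 1) (z (Fin.last n))) x z
      = (∏ j, (t * z (Fin.last n) * z j + 1)) *
        (∏ j : Fin n, (t + z (Fin.last n) * (z j.castSucc)⁻¹)) *
        (∏ j ∈ Finset.range (m + 1), ((1 - α j * γ j) * (z (Fin.last n))⁻¹ + α j)) *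
        (∏ j ∈ Finset.Icc 1 m, (1 - γ j * z (Fin.last n))) *
        FI m t α γ (fun j : Fin n => x j.castSucc) (fun j : Fin n => z j.castSucc) := by
  have hprefactor :=
    FI.prefactor_mul_prod_pairFactor t hz0 (FI.prefactorDen_ne_zero hz0 hz1 hzz hzne)
  have hrange : ∏ j ∈ range (m + 1), ((1 - α j * γ j) * (z (Fin.last n))⁻¹ + α j) =
      ∏ j ∈ range (m + 1), (α j + (1 - α j * γ j) * (z (Fin.last n))⁻¹) :=
    prod_congr rfl fun _ _ => add_comm _ _
  rw [FI.eq_prefactor_mul_altSum, FI.eq_prefactor_mul_altSum,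
    FI.altSum_update_succ α γ hx hxM (hz0 (Fin.last n)), hrange]
  linear_combination (∏ j ∈ range (m + 1), (α j + (1 - α j * γ j) * (z (Fin.last n))⁻¹)) *
    (∏ j ∈ Icc 1 m, (1 - γ j * z (Fin.last n))) *
    FI.altSum m α γ (fun j => x j.castSucc) (fun j => z j.castSucc) * hprefactor

/-- Izergin–Korepin recursion, Property (3) for `x_N = M`, in the proof of
Theorem 4.7: the specialization `γ_M = z_N` of `F^I_{M,N}` factorizes through
`F^I_{M-1,N-1}`.  Here `M = m+1`, `N = n+1`, so `F^I_{M-1,N-1}` is `FI m` on the first `n`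
variables/positions (interpreted as `1` when `n = 0`). -/
theorem FI_IzerginKorepin_recursion (m n : ℕ) (hmn : n ≤ m) (t : ℂ) (α γ : ℕ → ℂ)
    (x : Fin (n + 1) → ℕ) (hx : StrictMono x) (hx1 : ∀ j, 1 ≤ x j)
    (hxM : x (Fin.last n) = m + 1)
    (z : Fin (n + 1) → ℂ) (hz0 : ∀ j, z j ≠ 0) (hz1 : ∀ j, z j ^ 2 ≠ 1)
    (hzz : ∀ j k, j < k → z j * z k ≠ 1) (hzne : ∀ j k, j < k → z j ≠ z k) :
    FI (m + 1) t α (Function.update γ (m + 1) (z (Fin.last n))) x z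
      = (∏ j, (t * z (Fin.last n) * z j + 1)) *
        (∏ j : Fin n, (t + z (Fin.last n) * (z j.castSucc)⁻¹)) *
        (∏ j ∈ Finset.range (m + 1), ((1 - α j * γ j) * (z (Fin.last n))⁻¹ + α j)) *
        (∏ j ∈ Finset.Icc 1 m, (1 - γ j * z (Fin.last n))) *
        FI m t α γ (fun j : Fin n => x j.castSucc) (fun j : Fin n => z j.castSucc) :=
  FI_IzerginKorepin_recursion_general m n t α γ x hx hxM z hz0 hz1 hzz hzne
end
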